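/- arXiv:1707.04414 — 5 statements merged into one kernel-verified Lean document; each statement's English description precedes it below -/
import Mathlib

section
/- There exist sequences (xₙ) and (yₙ) in ℓ¹ and vectors x, y ∈ ℓ¹ such that xₙ → x and yₙ → y in the ℓ¹ norm, yet g(yₙ, xₙ) does not converge to g(y, x). Concretely, yₙ = (1/n, 1, 0, 0, …), xₙ = (1 + 1/n, 1, 0, 0, …), y = (0, 1, 0, 0, …) and x = (1, 1, 0, 0, …) satisfy g(yₙ, xₙ) = (1 + 1/n)(2 + 1/n) → 2 while g(y, x) = 1. -/
open scoped ENNReal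

/-- The semi-inner product on `ℓ¹`: `g(x,y) = ‖x‖₁ · ∑ₖ sgn(ξₖ) ηₖ`. -/
noncomputable def gL1 (x y : lp (fun _ : ℕ => ℝ) 1) : ℝ :=
  ‖x‖ * ∑' k : ℕ, Real.sign (x k) * y k

/-!
On `ℓ¹` the semi-inner product `g(y, x)` depends on `y` through its sign pattern `sgn(η_k)`,
which is not continuous at `0`. The first coordinate `1/n` of `yₙ` is positive, so for every `n` it
contributes the first coordinate `≈ 1` of `xₙ` to `g(yₙ, xₙ)`; in the limit `y` that coordinate
vanishes, `sgn 0 = 0`, and the contribution is lost.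
-/

open Filter Topology

theorem lp.norm_eq_tsum_abs {α : Type*} (x : lp (fun _ : α => ℝ) 1) : ‖x‖ = ∑' k, |x k| := by
  simp [lp.norm_eq_tsum_rpow (by norm_num : 0 < (1 : ℝ≥0∞).toReal), Real.norm_eq_abs]

theorem gL1_eq_sum_of_support_subset {x : lp (fun _ : ℕ => ℝ) 1} {s : Finset ℕ}
    (hx : ∀ k ∉ s, x k = 0) (y : lp (fun _ : ℕ => ℝ) 1) :
    gL1 x y = (∑ k ∈ s, |x k|) * ∑ k ∈ s, Real.sign (x k) * y k := by
  rw [gL1, lp.norm_eq_tsum_abs, tsum_eq_sum (s := s) (fun k hk => by simp [hx k hk]),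
    tsum_eq_sum (s := s) (fun k hk => by simp [hx k hk])]

theorem gL1_single_add_single (a b c d : ℝ) :
    gL1 (lp.single 1 0 a + lp.single 1 1 b) (lp.single 1 0 c + lp.single 1 1 d) =
      (|a| + |b|) * (Real.sign a * c + Real.sign b * d) := by
  rw [gL1_eq_sum_of_support_subset (s := {0, 1})]
  · simp
  · intro k hk
    simp only [Finset.mem_insert, Finset.mem_singleton, not_or] at hk
    simp [lp.single_apply, hk]

theorem lp.tendsto_single_add {α : Type*} [DecidableEq α] {E : α → Type*}
    [∀ i, NormedAddCommGroup (E i)] {p : ℝ≥0∞} [Fact (1 ≤ p)] {ι : Type*} {l : Filter ι}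
    (i : α) {a : ι → E i} {a₀ : E i}
    (ha : Tendsto a l (𝓝 a₀)) (v : lp E p) :
    Tendsto (fun n => lp.single p i (a n) + v) l (𝓝 (lp.single p i a₀ + v)) :=
  (((lp.isometry_single (E := E) (p := p) i).continuous.tendsto a₀).comp ha).add_const v

/-- Discontinuity of `g` on `ℓ¹`: with `yₙ = (1/n, 1, 0,…)`, `xₙ = (1 + 1/n, 1, 0,…)`,
`y = (0,1,0,…)`, `x = (1,1,0,…)` one has `xₙ → x`, `yₙ → y` in norm,
`g(yₙ,xₙ) = (1 + 1/n)(2 + 1/n) → 2`, while `g(y,x) = 1`; hence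
`g(yₙ,xₙ)` does not converge to `g(y,x)`. -/
theorem gL1_not_continuous :
    ∀ (xs ys : ℕ → lp (fun _ : ℕ => ℝ) 1) (x y : lp (fun _ : ℕ => ℝ) 1),
      (∀ n : ℕ, ys n = lp.single 1 0 (1 / (n : ℝ)) + lp.single 1 1 (1 : ℝ)) →
      (∀ n : ℕ, xs n = lp.single 1 0 (1 + 1 / (n : ℝ)) + lp.single 1 1 (1 : ℝ)) →
      y = lp.single 1 1 (1 : ℝ) →
      x = lp.single 1 0 (1 : ℝ) + lp.single 1 1 (1 : ℝ) →
      Filter.Tendsto xs Filter.atTop (nhds x) ∧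
      Filter.Tendsto ys Filter.atTop (nhds y) ∧
      (∀ n : ℕ, 1 ≤ n →
        gL1 (ys n) (xs n) = (1 + 1 / (n : ℝ)) * (2 + 1 / (n : ℝ))) ∧
      Filter.Tendsto (fun n => gL1 (ys n) (xs n)) Filter.atTop (nhds 2) ∧
      gL1 y x = 1 ∧
      ¬ Filter.Tendsto (fun n => gL1 (ys n) (xs n)) Filter.atTop (nhds (gL1 y x)) := by
  intro xs ys x y hys hxs rfl rfl
  obtain rfl : xs = _ := funext hxs
  obtain rfl : ys = _ := funext hys
  have hinv : Tendsto (fun n : ℕ => 1 / (n : ℝ)) atTop (𝓝 0) :=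
    tendsto_one_div_atTop_nhds_zero_nat
  have hval (n : ℕ) (hn : 1 ≤ n) :
      gL1 (lp.single 1 0 (1 / (n : ℝ)) + lp.single 1 1 1)
        (lp.single 1 0 (1 + 1 / (n : ℝ)) + lp.single 1 1 1) =
        (1 + 1 / (n : ℝ)) * (2 + 1 / (n : ℝ)) := by
    have hpos : (0 : ℝ) < 1 / n := by positivity
    rw [gL1_single_add_single, abs_of_pos hpos, Real.sign_of_pos hpos, abs_one,
      Real.sign_of_pos one_pos]
    ring
  have hlim : Tendsto (fun n : ℕ => (1 + 1 / (n : ℝ)) * (2 + 1 / (n : ℝ))) atTop (𝓝 2) := by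
    simpa using (tendsto_const_nhds (x := (1 : ℝ)).add hinv).mul
      (tendsto_const_nhds (x := (2 : ℝ)).add hinv)
  have hlim' := hlim.congr' <| (eventually_ge_atTop 1).mono fun n hn => (hval n hn).symm
  have hgyx : gL1 (lp.single 1 1 1) (lp.single 1 0 1 + lp.single 1 1 1) = 1 := by
    simpa [lp.single_zero] using gL1_single_add_single 0 1 1 1
  refine ⟨?_, ?_, hval, hlim', hgyx, fun h => ?_⟩
  · simpa only [add_zero] using lp.tendsto_single_add (E := fun _ => ℝ) (p := 1) 0
      (tendsto_const_nhds.add hinv) (lp.single 1 1 1)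
  · simpa only [lp.single_zero, zero_add] using
      lp.tendsto_single_add (E := fun _ => ℝ) (p := 1) 0 hinv (lp.single 1 1 1)
  rw [hgyx] at h
  have : (2 : ℝ) = 1 := tendsto_nhds_unique hlim' h
  norm_num at this
end

section
/- In ℓ¹, the vectors x₁ = (1,2,0,0,…) and x₂ = (2,1,0,0,…) are linearly independent over ℝ, yet g(x_i, x_j) = 9 for all i, j ∈ {1,2}, so the Gram determinant Γ(x₁, x₂) = det[g(x_i, x_j)] equals 0. Hence the converse of the statement 'Γ ≠ 0 implies linear independence' fails. -/
open scoped ENNReal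

lemma coe_two_single (c d : ℝ) (k : ℕ) :
    (lp.single 1 0 c + lp.single 1 1 d : lp (fun _ : ℕ => ℝ) 1) k
      = if k = 0 then c else if k = 1 then d else 0 := by
  have h : (lp.single 1 0 c + lp.single 1 1 d : lp (fun _ : ℕ => ℝ) 1) k
      = (lp.single 1 0 c : lp (fun _ : ℕ => ℝ) 1) k
        + (lp.single 1 1 d : lp (fun _ : ℕ => ℝ) 1) k := by
    rw [lp.coeFn_add]; rfl
  rw [h, lp.single_apply, lp.single_apply]
  rcases Nat.eq_zero_or_pos k with hk | hk
  · subst hk; simp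
  · rcases eq_or_ne k 1 with h1 | h1 <;> simp [h1, Nat.pos_iff_ne_zero.mp hk]

lemma norm_two_single (c d : ℝ) (hc : 0 ≤ c) (hd : 0 ≤ d) :
    ‖(lp.single 1 0 c + lp.single 1 1 d : lp (fun _ : ℕ => ℝ) 1)‖ = c + d := by
  rw [lp.norm_eq_tsum_rpow (by norm_num) _]
  have h1 : ((1 : ℝ≥0∞)).toReal = 1 := by simp
  rw [h1]
  simp only [Real.rpow_one]
  have hsum : ∑' k : ℕ,
      ‖(lp.single 1 0 c + lp.single 1 1 d : lp (fun _ : ℕ => ℝ) 1) k‖ = c + d := by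
    rw [tsum_eq_sum (s := {0, 1}) (by
      intro k hk
      simp only [Finset.mem_insert, Finset.mem_singleton, not_or] at hk
      rw [coe_two_single]
      simp [hk.1, hk.2])]
    rw [Finset.sum_insert (by simp)]
    simp [coe_two_single, abs_of_nonneg hc, abs_of_nonneg hd]
  rw [hsum]; simp

lemma gL1_two_single (c d c' d' : ℝ) (hc : 0 < c) (hd : 0 < d) :
    gL1 (lp.single 1 0 c + lp.single 1 1 d) (lp.single 1 0 c' + lp.single 1 1 d')
      = (c + d) * (c' + d') := by
  unfold gL1
  rw [norm_two_single c d hc.le hd.le]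
  congr 1
  rw [tsum_eq_sum (s := {0, 1}) (by
    intro k hk
    simp only [Finset.mem_insert, Finset.mem_singleton, not_or] at hk
    rw [coe_two_single, coe_two_single]
    simp [hk.1, hk.2])]
  rw [Finset.sum_insert (by simp)]
  simp [coe_two_single, Real.sign_of_pos hc, Real.sign_of_pos hd]

/-- In `ℓ¹`, the vectors `x₁ = (1,2,0,…)` and `x₂ = (2,1,0,…)` are linearly
independent, yet `g(xᵢ,xⱼ) = 9` for all `i,j`, so the Gram determinant
`Γ(x₁,x₂) = det[g(xᵢ,xⱼ)]` is `0`: the converse of "`Γ ≠ 0` implies linear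
independence" fails. -/
theorem gram_det_converse_fails :
    ∀ v : Fin 2 → lp (fun _ : ℕ => ℝ) 1,
      v 0 = lp.single 1 0 (1 : ℝ) + lp.single 1 1 (2 : ℝ) →
      v 1 = lp.single 1 0 (2 : ℝ) + lp.single 1 1 (1 : ℝ) →
      LinearIndependent ℝ v ∧
      (∀ i j : Fin 2, gL1 (v i) (v j) = 9) ∧
      (Matrix.of fun i j : Fin 2 => gL1 (v i) (v j)).det = 0 := by
  intro v h0 h1
  have e00 : gL1 (v 0) (v 0) = 9 := by
    rw [h0, gL1_two_single _ _ _ _ one_pos two_pos]; norm_num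
  have e01 : gL1 (v 0) (v 1) = 9 := by
    rw [h0, h1, gL1_two_single _ _ _ _ one_pos two_pos]; norm_num
  have e10 : gL1 (v 1) (v 0) = 9 := by
    rw [h0, h1, gL1_two_single _ _ _ _ two_pos one_pos]; norm_num
  have e11 : gL1 (v 1) (v 1) = 9 := by
    rw [h1, gL1_two_single _ _ _ _ two_pos one_pos]; norm_num
  have hg : ∀ i j : Fin 2, gL1 (v i) (v j) = 9 := by
    intro i j
    fin_cases i <;> fin_cases j <;>
      first | exact e00 | exact e01 | exact e10 | exact e11
  refine ⟨?_, hg, ?_⟩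
  · rw [linearIndependent_fin2]
    constructor
    · intro h
      have hz : ((lp.single 1 0 (2:ℝ) + lp.single 1 1 (1:ℝ) :
          lp (fun _ : ℕ => ℝ) 1) : ℕ → ℝ) 0 = 0 := by
        rw [← h1, h]; rfl
      rw [coe_two_single] at hz
      norm_num at hz
    · intro a h
      have e0 : a * ((v 1 : ℕ → ℝ) 0) = (v 0 : ℕ → ℝ) 0 := by rw [← h]; rfl
      have e1 : a * ((v 1 : ℕ → ℝ) 1) = (v 0 : ℕ → ℝ) 1 := by rw [← h]; rfl
      rw [h0, h1, coe_two_single, coe_two_single] at e0 e1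
      norm_num at e0 e1
      rw [e1] at e0; norm_num at e0
  · rw [Matrix.det_fin_two]
    simp [hg]
end

section
/- Let g be a semi-inner product on a real normed space X, let x₁, …, xₙ ∈ X with Γ(x₁,…,xₙ) ≠ 0, and let y ∈ X. Then there exists a unique vector y_S in span{x₁,…,xₙ} such that g(x_i, y − y_S) = 0 for every i = 1, …, n (y_S is the g-orthogonal projection of y on S = span{x₁,…,xₙ}). -/
structure SemiInnerProduct (X : Type*) [NormedAddCommGroup X] [NormedSpace ℝ X] where
  g : X → X → ℝ
  g_self : ∀ x : X, g x x = ‖x‖ ^ 2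
  g_smul : ∀ (a b : ℝ) (x y : X), g (a • x) (b • y) = a * b * g x y
  g_add_right : ∀ x y z : X, g x (y + z) = g x y + g x z
  g_bound : ∀ x y : X, |g x y| ≤ ‖x‖ * ‖y‖

noncomputable def gAngle {X : Type*} [NormedAddCommGroup X] [NormedSpace ℝ X]
    (G : SemiInnerProduct X) (x y : X) : ℝ :=
  Real.arccos (G.g y x / (‖x‖ * ‖y‖))

/-!
Write `Γ` for the Gram matrix `[g(xᵢ, xₖ)]` and `Φ z := (g(xᵢ, z))ᵢ`. Since `g` is linear in its
second variable, `Φ` is linear and `Φ (∑ₖ cₖ xₖ) = Γ c`. As `Γ` is invertible, `Φ` is therefore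
bijective from `span {xᵢ}` onto `ℝⁿ`, and `y_S` is the unique preimage of `Φ y`.
-/

open Matrix Submodule Set

namespace SemiInnerProduct

variable {X : Type*} [NormedAddCommGroup X] [NormedSpace ℝ X] (G : SemiInnerProduct X)

@[simps]
def gRight (u : X) : X →ₗ[ℝ] ℝ where
  toFun := G.g u
  map_add' := G.g_add_right u
  map_smul' c z := by simpa using G.g_smul 1 c u z

variable {ι : Type*} (x : ι → X)

def gramMatrix : Matrix ι ι ℝ :=
  of fun i k => G.g (x i) (x k)

def gramMap : X →ₗ[ℝ] ι → ℝ :=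
  LinearMap.pi fun i => G.gRight (x i)

@[simp]
theorem gramMap_apply (z : X) (i : ι) :
    G.gramMap x z i = G.g (x i) z :=
  rfl

variable [Fintype ι]

theorem gramMap_linearCombination (c : ι → ℝ) :
    G.gramMap x (Fintype.linearCombination ℝ x c) = G.gramMatrix x *ᵥ c := by
  ext i
  change G.gRight (x i) (∑ k, c k • x k) = _
  simp only [map_sum, map_smul, smul_eq_mul, gRight_apply, mulVec, dotProduct, gramMatrix,
    of_apply, mul_comm]

variable [DecidableEq ι]

theorem eq_zero_of_mem_span_of_gramMap_eq_zero (hΓ : (G.gramMatrix x).det ≠ 0) {z : X}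
    (hz : z ∈ span ℝ (range x)) (h : G.gramMap x z = 0) : z = 0 := by
  rw [← Fintype.range_linearCombination] at hz
  obtain ⟨c, rfl⟩ := hz
  rw [gramMap_linearCombination] at h
  rw [eq_zero_of_mulVec_eq_zero hΓ h, map_zero]

theorem exists_mem_span_gramMap_eq (hΓ : IsUnit (G.gramMatrix x).det)
    (v : ι → ℝ) : ∃ z ∈ span ℝ (range x), G.gramMap x z = v := by
  obtain ⟨c, hc⟩ := mulVec_surjective_iff_isUnit.mpr
    ((isUnit_iff_isUnit_det _).mpr hΓ) v
  refine ⟨Fintype.linearCombination ℝ x c, ?_, (G.gramMap_linearCombination x c).trans hc⟩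
  exact Fintype.range_linearCombination ℝ x ▸ LinearMap.mem_range_self _ c

theorem existsUnique_mem_span_gramMap_eq (hΓ : (G.gramMatrix x).det ≠ 0) (v : ι → ℝ) :
    ∃! z, z ∈ span ℝ (range x) ∧ G.gramMap x z = v := by
  obtain ⟨z, hz, rfl⟩ := G.exists_mem_span_gramMap_eq x (isUnit_iff_ne_zero.mpr hΓ) v
  refine ⟨z, ⟨hz, rfl⟩, fun w ⟨hw, hwz⟩ => sub_eq_zero.mp ?_⟩
  exact G.eq_zero_of_mem_span_of_gramMap_eq_zero x hΓ (sub_mem hw hz)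
    (by rw [map_sub, hwz, sub_self])

end SemiInnerProduct

/-- If `Γ(x₁,…,xₙ) ≠ 0`, then for every `y` there is a unique `yS` in
`span{x₁,…,xₙ}` with `g(xᵢ, y − yS) = 0` for all `i` (the g-orthogonal
projection of `y` on `S`). -/
theorem exists_unique_g_orthogonal_projection
    {X : Type*} [NormedAddCommGroup X] [NormedSpace ℝ X]
    (G : SemiInnerProduct X) (n : ℕ) (x : Fin n → X)
    (hΓ : (Matrix.of fun i k : Fin n => G.g (x i) (x k)).det ≠ 0) (y : X) :
    ∃! yS : X, yS ∈ Submodule.span ℝ (Set.range x) ∧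
      ∀ i : Fin n, G.g (x i) (y - yS) = 0 := by
  have orthogonal_iff (yS : X) :
      (∀ i, G.g (x i) (y - yS) = 0) ↔ G.gramMap x yS = G.gramMap x y := by
    rw [eq_comm, ← sub_eq_zero, ← map_sub, funext_iff]
    simp only [SemiInnerProduct.gramMap_apply, Pi.zero_apply]
  simpa only [orthogonal_iff] using G.existsUnique_mem_span_gramMap_eq x hΓ (G.gramMap x y)
end

section
/- In ℓ¹, the vectors x = (1,2,0,0,…) and y = (2,1,0,0,…) are linearly independent over ℝ, yet Λ(x,y) = 0 (with respect to the semi-inner product g on ℓ¹). Hence Λ(x,y) = 0 does not imply linear dependence. -/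
open scoped ENNReal

/-- `Λ(x,y) := (‖x‖²·‖y‖² − |g(x,y)|·|g(y,x)|)^{1/2}` on `ℓ¹`. -/
noncomputable def LamL1 (x y : lp (fun _ : ℕ => ℝ) 1) : ℝ :=
  Real.sqrt (‖x‖ ^ 2 * ‖y‖ ^ 2 - |gL1 x y| * |gL1 y x|)

/-! Both vectors have `ℓ¹`-norm `3` and sign pattern `(1, 1)`, so `g(x,y) = g(y,x) = 3 · 3`
equals `‖x‖ ‖y‖` and `Λ(x,y) = 0`; yet `det [[1, 2], [2, 1]] = -3 ≠ 0`. -/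

namespace lp

variable {ι : Type*} [DecidableEq ι] {E : ι → Type*} [∀ k, NormedAddCommGroup (E k)]
  {p : ℝ≥0∞}

theorem single_add_single_apply_left {i j : ι} (hij : i ≠ j) (a : E i) (b : E j) :
    (lp.single p i a + lp.single p j b) i = a := by
  rw [coeFn_add, Pi.add_apply, lp.single_apply_self, lp.single_apply_ne p j b hij, add_zero]

theorem single_add_single_apply_right {i j : ι} (hij : i ≠ j) (a : E i) (b : E j) :
    (lp.single p i a + lp.single p j b) j = b := by
  rw [coeFn_add, Pi.add_apply, lp.single_apply_self, lp.single_apply_ne p i a hij.symm, zero_add]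

theorem single_add_single_apply_of_ne {i j k : ι} (hki : k ≠ i) (hkj : k ≠ j)
    (a : E i) (b : E j) : (lp.single p i a + lp.single p j b) k = 0 := by
  rw [coeFn_add, Pi.add_apply, lp.single_apply_ne p i a hki, lp.single_apply_ne p j b hkj,
    add_zero]

theorem linearIndependent_pair_single_add_single {i j : ι} (hij : i ≠ j) {a b c d : ℝ}
    (hdet : a * d - b * c ≠ 0) :
    LinearIndependent ℝ ![lp.single 1 i a + lp.single 1 j b,
      (lp.single 1 i c + lp.single 1 j d : lp (fun _ : ι => ℝ) 1)] := by
  rw [LinearIndependent.pair_iff]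
  intro s t hst
  have coord (k : ι) := congrArg (· k) hst
  simp only [coeFn_add, coeFn_smul, coeFn_zero, Pi.add_apply, Pi.smul_apply, Pi.zero_apply,
    smul_eq_mul] at coord
  have hi : s * a + t * c = 0 := by
    simpa only [lp.single_apply_self, lp.single_apply_ne 1 j _ hij, add_zero] using coord i
  have hj : s * b + t * d = 0 := by
    simpa only [lp.single_apply_self, lp.single_apply_ne 1 i _ hij.symm, zero_add] using coord j
  -- Cramer's rule
  have hs : s * (a * d - b * c) = 0 := by linear_combination d * hi - c * hj
  have ht : t * (a * d - b * c) = 0 := by linear_combination a * hj - b * hi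
  exact ⟨(mul_eq_zero.mp hs).resolve_right hdet, (mul_eq_zero.mp ht).resolve_right hdet⟩

theorem norm_single_add_single_of_ne {i j : ι} (hij : i ≠ j) (a : E i) (b : E j) :
    ‖lp.single 1 i a + lp.single 1 j b‖ = ‖a‖ + ‖b‖ := by
  have hsum : lp.single 1 i a + lp.single 1 j b
      = ∑ k ∈ {i, j}, lp.single 1 k ((lp.single 1 i a + lp.single 1 j b) k) := by
    rw [Finset.sum_pair hij, single_add_single_apply_left hij, single_add_single_apply_right hij]
  have := lp.norm_sum_single (p := 1) (by simp) (lp.single 1 i a + lp.single 1 j b) {i, j}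
  rwa [← hsum, Finset.sum_pair hij, single_add_single_apply_left hij,
    single_add_single_apply_right hij, ENNReal.toReal_one, Real.rpow_one, Real.rpow_one,
    Real.rpow_one] at this

end lp

theorem gL1_single_add_single_of_ne {i j : ℕ} (hij : i ≠ j) (a b : ℝ)
    (y : lp (fun _ : ℕ => ℝ) 1) :
    gL1 (lp.single 1 i a + lp.single 1 j b) y
      = (|a| + |b|) * (Real.sign a * y i + Real.sign b * y j) := by
  rw [gL1, lp.norm_single_add_single_of_ne hij, Real.norm_eq_abs, Real.norm_eq_abs,
    tsum_eq_sum (s := {i, j}), Finset.sum_pair hij, lp.single_add_single_apply_left hij,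
    lp.single_add_single_apply_right hij]
  intro k hk
  simp only [Finset.mem_insert, Finset.mem_singleton, not_or] at hk
  rw [lp.single_add_single_apply_of_ne hk.1 hk.2, Real.sign_zero, zero_mul]

/-- In `ℓ¹`, the vectors `x = (1,2,0,…)` and `y = (2,1,0,…)` are linearly
independent, yet `Λ(x,y) = 0`: `Λ(x,y) = 0` does not imply linear dependence. -/
theorem LamL1_eq_zero_not_imp_dependent :
    ∀ x y : lp (fun _ : ℕ => ℝ) 1,
      x = lp.single 1 0 (1 : ℝ) + lp.single 1 1 (2 : ℝ) →
      y = lp.single 1 0 (2 : ℝ) + lp.single 1 1 (1 : ℝ) →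
      LinearIndependent ℝ ![x, y] ∧ LamL1 x y = 0 := by
  rintro x y rfl rfl
  refine ⟨lp.linearIndependent_pair_single_add_single zero_ne_one (by norm_num), ?_⟩
  rw [LamL1, gL1_single_add_single_of_ne zero_ne_one, gL1_single_add_single_of_ne zero_ne_one,
    lp.norm_single_add_single_of_ne zero_ne_one, lp.norm_single_add_single_of_ne zero_ne_one]
  simp only [lp.single_add_single_apply_left zero_ne_one,
    lp.single_add_single_apply_right zero_ne_one]
  norm_num [Real.sign_of_pos]
end

section
/- In ℓ¹ with the semi-inner product g, the function Λ fails the triangle inequality in its second argument: for x = (3,1,0,0,…), y = (−2,0,0,0,…), z = (0,2,0,0,…) one has Λ(x,y) = 4, Λ(x,z) = 4√3, and Λ(x, y+z) = 16, so Λ(x, y+z) > Λ(x,y) + Λ(x,z). -/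
open scoped ENNReal

lemma hp1 : 0 < (1 : ℝ≥0∞).toReal := by simp

lemma tsum_two (f : ℕ → ℝ) (h : ∀ k, k ≠ 0 → k ≠ 1 → f k = 0) :
    ∑' k, f k = f 0 + f 1 := by
  rw [tsum_eq_sum (s := ({0,1} : Finset ℕ))]
  · simp
  · intro k hk
    simp only [Finset.mem_insert, Finset.mem_singleton, not_or] at hk
    exact h k hk.1 hk.2

lemma norm_single1 (i : ℕ) (a : ℝ) : ‖(lp.single 1 i a : lp (fun _ : ℕ => ℝ) 1)‖ = |a| := by
  simpa using lp.norm_single hp1 (fun _ : ℕ => a) i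

lemma norm_pair (a b : ℝ) :
    ‖(lp.single 1 0 a + lp.single 1 1 b : lp (fun _ : ℕ => ℝ) 1)‖ = |a| + |b| := by
  set F : ℕ → ℝ := fun k => if k = 0 then a else if k = 1 then b else 0 with hF
  have h1 : (lp.single 1 0 a + lp.single 1 1 b : lp (fun _ : ℕ => ℝ) 1)
      = ∑ i ∈ ({0,1} : Finset ℕ), lp.single 1 i (F i) := by
    simp [hF]
  have h2 := lp.norm_sum_single hp1 F ({0,1} : Finset ℕ)
  rw [← h1] at h2
  simp only [ENNReal.toReal_one, Real.rpow_one] at h2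
  rw [h2]
  simp [hF]

lemma pair_apply (a b : ℝ) (k : ℕ) :
    (lp.single 1 0 a + lp.single 1 1 b : lp (fun _ : ℕ => ℝ) 1) k
      = if k = 0 then a else if k = 1 then b else 0 := by
  rw [lp.coeFn_add, Pi.add_apply, lp.single_apply, lp.single_apply]
  split_ifs with h1 h2 <;> first | (exfalso; omega) | simp_all

lemma single_apply1 (i : ℕ) (a : ℝ) (k : ℕ) :
    (lp.single 1 i a : lp (fun _ : ℕ => ℝ) 1) k = if k = i then a else 0 := by
  rw [lp.single_apply]
  split_ifs with h <;> simp_all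

/-- In `ℓ¹`, with `x = (3,1,0,…)`, `y = (−2,0,0,…)`, `z = (0,2,0,…)` one has
`Λ(x,y) = 4`, `Λ(x,z) = 4√3`, `Λ(x,y+z) = 16`, and
`Λ(x,y+z) > Λ(x,y) + Λ(x,z)`: `Λ` fails the triangle inequality in the second
argument. -/
theorem LamL1_triangle_fails :
    ∀ x y z : lp (fun _ : ℕ => ℝ) 1,
      x = lp.single 1 0 (3 : ℝ) + lp.single 1 1 (1 : ℝ) →
      y = lp.single 1 0 (-2 : ℝ) →
      z = lp.single 1 1 (2 : ℝ) →
      LamL1 x y = 4 ∧ LamL1 x z = 4 * Real.sqrt 3 ∧ LamL1 x (y + z) = 16 ∧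
      LamL1 x (y + z) > LamL1 x y + LamL1 x z := by
  intro x y z hx hy hz
  have nx : ‖x‖ = 4 := by rw [hx, norm_pair]; norm_num
  have ny : ‖y‖ = 2 := by rw [hy, norm_single1]; norm_num
  have nz : ‖z‖ = 2 := by rw [hz, norm_single1]; norm_num
  have hw : y + z = lp.single 1 0 (-2 : ℝ) + lp.single 1 1 (2 : ℝ) := by rw [hy, hz]
  have nw : ‖y + z‖ = 4 := by rw [hw, norm_pair]; norm_num
  have hxk : ∀ k, x k = if k = 0 then 3 else if k = 1 then 1 else 0 := fun k => by
    rw [hx]; exact pair_apply _ _ _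
  have hyk : ∀ k, y k = if k = 0 then -2 else 0 := fun k => by
    rw [hy]; exact single_apply1 _ _ _
  have hzk : ∀ k, z k = if k = 1 then 2 else 0 := fun k => by
    rw [hz]; exact single_apply1 _ _ _
  have hwk : ∀ k, (y + z) k = if k = 0 then -2 else if k = 1 then 2 else 0 := fun k => by
    rw [hw]; exact pair_apply _ _ _
  have s3 : Real.sign (3 : ℝ) = 1 := Real.sign_of_pos (by norm_num)
  have s1 : Real.sign (1 : ℝ) = 1 := Real.sign_of_pos (by norm_num)
  have s2 : Real.sign (2 : ℝ) = 1 := Real.sign_of_pos (by norm_num)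
  have sm2 : Real.sign (-2 : ℝ) = -1 := Real.sign_of_neg (by norm_num)
  have gxy : gL1 x y = -8 := by
    unfold gL1
    rw [tsum_two _ (fun k h0 h1 => by simp [hxk, hyk, h0, h1]), nx]
    simp [hxk, hyk, s3, s1]
    norm_num
  have gyx : gL1 y x = -6 := by
    unfold gL1
    rw [tsum_two _ (fun k h0 h1 => by simp [hxk, hyk, h0, h1]), ny]
    simp [hxk, hyk, sm2]
    norm_num
  have gxz : gL1 x z = 8 := by
    unfold gL1
    rw [tsum_two _ (fun k h0 h1 => by simp [hxk, hzk, h0, h1]), nx]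
    simp [hxk, hzk, s3, s1]
    norm_num
  have gzx : gL1 z x = 2 := by
    unfold gL1
    rw [tsum_two _ (fun k h0 h1 => by simp [hxk, hzk, h0, h1]), nz]
    simp [hxk, hzk, s2]
  have gxw : gL1 x (y + z) = 0 := by
    unfold gL1
    rw [tsum_two _ (fun k h0 h1 => by simp [hxk, hwk, h0, h1]), nx]
    simp [hxk, hwk, s3, s1]
  have L1 : LamL1 x y = 4 := by
    unfold LamL1
    rw [nx, ny, gxy, gyx]
    rw [show (4:ℝ)^2 * 2^2 - |(-8:ℝ)| * |(-6:ℝ)| = 4^2 by norm_num]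
    exact Real.sqrt_sq (by norm_num)
  have L2 : LamL1 x z = 4 * Real.sqrt 3 := by
    unfold LamL1
    rw [nx, nz, gxz, gzx]
    rw [show (4:ℝ)^2 * 2^2 - |(8:ℝ)| * |(2:ℝ)| = 4^2 * 3 by norm_num]
    rw [Real.sqrt_mul (by positivity), Real.sqrt_sq (by norm_num)]
  have L3 : LamL1 x (y + z) = 16 := by
    unfold LamL1
    rw [nx, nw, gxw]
    rw [show (4:ℝ)^2 * 4^2 - |(0:ℝ)| * |gL1 (y+z) x| = 16^2 by norm_num]
    exact Real.sqrt_sq (by norm_num)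
  refine ⟨L1, L2, L3, ?_⟩
  rw [L1, L2, L3]
  have h3 : Real.sqrt 3 < 2 := by
    nlinarith [Real.sq_sqrt (show (0:ℝ) ≤ 3 by norm_num), Real.sqrt_nonneg 3]
  linarith
end
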